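/- arXiv:0803.3405 — 8 statements merged into one kernel-verified Lean document; each statement's English description precedes it below -/
import Mathlib

section
/- Let G be a topological group and Δ a continuous right-invariant pseudometric on G. Then the action map (x, f) ↦ x·f from G × BLip⁺(Δ) to BLip⁺(Δ) is continuous, where BLip⁺(Δ) carries the topology of pointwise convergence. -/
/-! Functions in `BLip⁺(Δ)` form an equicontinuous family, and on such a family evaluation
`(x, f) ↦ f x` is jointly continuous for the pointwise topology, because
`|f x - f₀ x₀| ≤ Δ(x, x₀) + |f x₀ - f₀ x₀|`. The action is evaluation at `z * x`. -/

open Cardinal Topology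

universe u

/-- `Δ` is a pseudometric: vanishes on the diagonal, symmetric, triangle inequality. -/
def IsPseudometric {G : Type u} (Δ : G → G → ℝ) : Prop :=
  (∀ x, Δ x x = 0) ∧ (∀ x y, Δ x y = Δ y x) ∧ (∀ x y z, Δ x z ≤ Δ x y + Δ y z)

/-- Right invariance of a pseudometric on a group. -/
def RightInvariant {G : Type u} [Group G] (Δ : G → G → ℝ) : Prop :=
  ∀ z z' x, Δ (z * x) (z' * x) = Δ z z'

/-- `BLip⁺(Δ)`: [0,1]-valued functions that are 1-Lipschitz for `Δ`. -/
def BLip {G : Type u} (Δ : G → G → ℝ) : Set (G → ℝ) :=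
  {f | (∀ x, 0 ≤ f x ∧ f x ≤ 1) ∧ ∀ x y, |f x - f y| ≤ Δ x y}

/-- Right translation `(x·f)(z) = f(zx)`. -/
def rtrans {G : Type u} [Group G] (x : G) (f : G → ℝ) : G → ℝ := fun z => f (z * x)

/-- The right orbit of `f`. -/
def rorbit {G : Type u} [Group G] (f : G → ℝ) : Set (G → ℝ) := {g | ∃ x : G, g = rtrans x f}

/-- A continuous right-invariant pseudometric on a topological group. -/
def IsCRIP {G : Type u} [Group G] [TopologicalSpace G] (Δ : G → G → ℝ) : Prop :=
  IsPseudometric Δ ∧ RightInvariant Δ ∧ Continuous fun p : G × G => Δ p.1 p.2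

/-- `d(Δ)`: least cardinality of a `Δ`-dense subset of `G`. -/
noncomputable def dDens {G : Type u} (Δ : G → G → ℝ) : Cardinal.{u} :=
  sInf {c | ∃ H : Set G, (∀ x : G, ∀ ε : ℝ, 0 < ε → ∃ h ∈ H, Δ x h < ε) ∧ c = Cardinal.mk H}

/-- `η♯(Δ)`: least cardinality of `P ⊆ G` with `G = ⋃_{p ∈ P} {x | Δ(p,x) ≤ 1}`. -/
noncomputable def etaSharp {G : Type u} (Δ : G → G → ℝ) : Cardinal.{u} :=
  sInf {c | ∃ P : Set G, (∀ x : G, ∃ p ∈ P, Δ p x ≤ 1) ∧ c = Cardinal.mk P}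

/-- `Δ♭(Δ)`: least cardinality of `P ⊆ G` admitting a finite `Q ⊆ G` with
`G = ⋃_{q ∈ Q} ⋃_{p ∈ P} {x | Δ(p, qx) ≤ 1}`. -/
noncomputable def deltaFlat {G : Type u} [Group G] (Δ : G → G → ℝ) : Cardinal.{u} :=
  sInf {c | ∃ P : Set G,
    (∃ Q : Set G, Q.Finite ∧ ∀ x : G, ∃ q ∈ Q, ∃ p ∈ P, Δ p (q * x) ≤ 1) ∧
    c = Cardinal.mk P}

/-- Bounded right uniformly continuous real function on a topological group
(the right uniformity being generated by continuous right-invariant pseudometrics). -/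
def BddRUC {G : Type u} [Group G] [TopologicalSpace G] (f : G → ℝ) : Prop :=
  (∃ C : ℝ, ∀ x, |f x| ≤ C) ∧
  ∀ ε : ℝ, 0 < ε → ∃ Δ : G → G → ℝ, IsCRIP Δ ∧
    ∃ δ : ℝ, 0 < δ ∧ ∀ x y, Δ x y < δ → |f x - f y| < ε

/-- `G` is ambitable: every `BLip⁺(Δ)` is contained in the pointwise closure of the
right orbit of some bounded right uniformly continuous function. -/
def Ambitable (G : Type u) [Group G] [TopologicalSpace G] : Prop :=
  ∀ Δ : G → G → ℝ, IsCRIP Δ →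
    ∃ f : G → ℝ, BddRUC f ∧ BLip Δ ⊆ closure (rorbit f)

/-- `G` is precompact: every continuous right-invariant pseudometric admits finite
`ε`-dense sets. -/
def PrecompactGrp (G : Type u) [Group G] [TopologicalSpace G] : Prop :=
  ∀ Δ : G → G → ℝ, IsCRIP Δ → ∀ ε : ℝ, 0 < ε →
    ∃ F : Set G, F.Finite ∧ ∀ x : G, ∃ p ∈ F, Δ x p < ε

/-- `G` is `κ`-bounded: every neighbourhood `U` of the identity admits `H` with
`|H| ≤ κ` and `U * H = G`. -/
def KBounded (G : Type u) [Group G] [TopologicalSpace G] (κ : Cardinal.{u}) : Prop :=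
  ∀ U ∈ nhds (1 : G), ∃ H : Set G, Cardinal.mk H ≤ κ ∧
    ∀ x : G, ∃ u ∈ U, ∃ h ∈ H, x = u * h

/-- `G` is locally `κ`-bounded: the identity has a neighbourhood `U` such that for each
continuous right-invariant pseudometric `Δ` there is a `Δ`-dense subset `H` of `U`
with `|H| ≤ κ`. -/
def LocallyKBounded (G : Type u) [Group G] [TopologicalSpace G] (κ : Cardinal.{u}) : Prop :=
  ∃ U ∈ nhds (1 : G), ∀ Δ : G → G → ℝ, IsCRIP Δ →
    ∃ H : Set G, H ⊆ U ∧ Cardinal.mk H ≤ κ ∧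
      ∀ x ∈ U, ∀ ε : ℝ, 0 < ε → ∃ h ∈ H, Δ x h < ε

theorem continuous_eval_of_abs_sub_le {X : Type*} [TopologicalSpace X] {d : X → X → ℝ}
    (hd : Continuous fun p : X × X => d p.1 p.2) (hd_self : ∀ x, d x x = 0) {S : Set (X → ℝ)}
    (hS : ∀ f ∈ S, ∀ x y, |f x - f y| ≤ d x y) :
    Continuous fun p : X × S => (p.2 : X → ℝ) p.1 := by
  refine continuous_iff_continuousAt.2 fun ⟨x₀, f₀⟩ => ?_
  have h_bound : ∀ p : X × S, |(p.2 : X → ℝ) p.1 - (f₀ : X → ℝ) x₀|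
      ≤ d p.1 x₀ + |(p.2 : X → ℝ) x₀ - (f₀ : X → ℝ) x₀| := fun ⟨x, f⟩ =>
    (abs_sub_le _ _ _).trans (add_le_add_left (hS f f.2 x x₀) _)
  have h_lim : Continuous fun p : X × S => d p.1 x₀ + |(p.2 : X → ℝ) x₀ - (f₀ : X → ℝ) x₀| :=
    (hd.comp (continuous_fst.prodMk continuous_const)).add
      (((continuous_apply x₀).comp (continuous_subtype_val.comp continuous_snd)).sub
        continuous_const).abs
  have h_zero := h_lim.tendsto (x₀, f₀)
  simp only [hd_self, sub_self, abs_zero, add_zero] at h_zero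
  exact tendsto_iff_norm_sub_tendsto_zero.2 <|
    squeeze_zero (fun _ => norm_nonneg _) h_bound h_zero

theorem rtrans_mem_BLip {G : Type u} [Group G] {Δ : G → G → ℝ} (hΔ : RightInvariant Δ)
    (x : G) {f : G → ℝ} (hf : f ∈ BLip Δ) : rtrans x f ∈ BLip Δ :=
  ⟨fun z => hf.1 (z * x), fun z y => (hf.2 _ _).trans_eq (hΔ z y x)⟩

/-- the action `(x, f) ↦ x·f` is continuous from `G × BLip⁺(Δ)` to
`BLip⁺(Δ)` (pointwise topology); it maps into `BLip⁺(Δ)` and is continuous. -/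
theorem rtrans_action_continuous {G : Type u} [Group G] [TopologicalSpace G]
    [IsTopologicalGroup G] (Δ : G → G → ℝ) (hΔ : IsCRIP Δ) :
    (∀ p : G × (BLip Δ), rtrans p.1 (p.2 : G → ℝ) ∈ BLip Δ) ∧
    Continuous fun p : G × (BLip Δ) => rtrans p.1 (p.2 : G → ℝ) := by
  obtain ⟨⟨hΔ_self, -, -⟩, hΔ_inv, hΔ_cont⟩ := hΔ
  refine ⟨fun p => rtrans_mem_BLip hΔ_inv p.1 p.2.2, continuous_pi fun z => ?_⟩
  have h_eval := continuous_eval_of_abs_sub_le hΔ_cont hΔ_self (S := BLip Δ) fun f hf => hf.2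
  exact h_eval.comp ((continuous_const.mul continuous_fst).prodMk continuous_snd)
end

section
/- No precompact topological group is ambitable: if G is a precompact topological group, then there exists a continuous right-invariant pseudometric Δ on G such that no f in the space of bounded right uniformly continuous functions on G satisfies BLip⁺(Δ) ⊆ closure of the right orbit of f in ℝ^G. In fact, for every bounded right uniformly continuous f on G, the constant functions 0 and 1 cannot both lie in the pointwise closure of { x·f | x ∈ G }. -/
open Cardinal Topology

universe u

/-!
Uniform continuity of `f` for some continuous right-invariant pseudometric `Δ`, together with a
finite `Δ`-dense set `F`, upgrades pointwise closeness on `F` to uniform closeness: if a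
translate `x·f` is within `1/4` of a constant `c` on `F`, then it is within `1/2` of `c`
everywhere. So if `0` and `1` are both orbit limits there are `x, y` with `x·f < 1/2` and
`y·f > 1/2` everywhere, and evaluating at `1` and at `x y⁻¹` both read off `f x`. Taking
`Δ = 0`, both constants lie in `BLip⁺(Δ)`, so `G` is not ambitable.
-/

lemma const_mem_bLip_zero {G : Type u} {c : ℝ} (h₀ : 0 ≤ c) (h₁ : c ≤ 1) :
    (fun _ : G => c) ∈ BLip (fun _ _ : G => (0 : ℝ)) :=
  ⟨fun _ => ⟨h₀, h₁⟩, fun _ _ => by simp⟩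

section

variable {G : Type u} [Group G]

lemma exists_forall_abs_rtrans_sub_lt_of_mem_closure_rorbit [TopologicalSpace G]
    {f g : G → ℝ} (hg : g ∈ closure (rorbit f)) {F : Set G} (hF : F.Finite) {r : ℝ}
    (hr : 0 < r) : ∃ x : G, ∀ p ∈ F, |f (p * x) - g p| < r := by
  set U : Set (G → ℝ) := ⋂ p ∈ F, (fun h : G → ℝ => h p) ⁻¹' Metric.ball (g p) r
  have hU : IsOpen U :=
    hF.isOpen_biInter fun p _ => Metric.isOpen_ball.preimage (continuous_apply p)
  have hgU : g ∈ U := by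
    simp only [U, Set.mem_iInter, Set.mem_preimage, Metric.mem_ball, dist_self]
    exact fun _ _ => hr
  obtain ⟨_, hxU, x, rfl⟩ := mem_closure_iff.mp hg U hU hgU
  simp only [U, Set.mem_iInter, Set.mem_preimage, Metric.mem_ball, rtrans,
    Real.dist_eq] at hxU
  exact ⟨x, hxU⟩

lemma abs_rtrans_sub_lt_of_dense {Δ : G → G → ℝ} (hΔ : RightInvariant Δ) {F : Set G}
    {δ : ℝ} (hF : ∀ w, ∃ p ∈ F, Δ w p < δ) {f : G → ℝ} {ε : ℝ}
    (hf : ∀ a b, Δ a b < δ → |f a - f b| < ε) {x : G} {c r : ℝ}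
    (hx : ∀ p ∈ F, |f (p * x) - c| < r) (w : G) : |f (w * x) - c| < ε + r := by
  obtain ⟨p, hpF, hwp⟩ := hF w
  have hclose : |f (w * x) - f (p * x)| < ε := hf _ _ (by rw [hΔ]; exact hwp)
  linarith [abs_sub_le (f (w * x)) (f (p * x)) c, hx p hpF]

lemma PrecompactGrp.not_zero_and_one_mem_closure_rorbit [TopologicalSpace G]
    (hpc : PrecompactGrp G) {f : G → ℝ} (hf : BddRUC f) :
    ¬ ((fun _ : G => (0 : ℝ)) ∈ closure (rorbit f) ∧
       (fun _ : G => (1 : ℝ)) ∈ closure (rorbit f)) := by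
  rintro ⟨h0, h1⟩
  obtain ⟨Δ, hΔ, δ, hδ, hfΔ⟩ := hf.2 (1 / 4) (by norm_num)
  obtain ⟨F, hFfin, hF⟩ := hpc Δ hΔ δ hδ
  obtain ⟨x, hx⟩ :=
    exists_forall_abs_rtrans_sub_lt_of_mem_closure_rorbit h0 hFfin (r := 1 / 4) (by norm_num)
  obtain ⟨y, hy⟩ :=
    exists_forall_abs_rtrans_sub_lt_of_mem_closure_rorbit h1 hFfin (r := 1 / 4) (by norm_num)
  have hfx₀ := abs_rtrans_sub_lt_of_dense hΔ.2.1 hF hfΔ hx 1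
  have hfx₁ := abs_rtrans_sub_lt_of_dense hΔ.2.1 hF hfΔ hy (x * y⁻¹)
  rw [one_mul] at hfx₀
  rw [inv_mul_cancel_right] at hfx₁
  linarith [(abs_lt.mp hfx₀).2, (abs_lt.mp hfx₁).1]

lemma isCRIP_zero [TopologicalSpace G] : IsCRIP (fun _ _ : G => (0 : ℝ)) :=
  ⟨⟨fun _ => rfl, fun _ _ => rfl, fun _ _ _ => by norm_num⟩, fun _ _ _ => rfl,
    continuous_const⟩

lemma not_ambitable_of_forall_not_zero_and_one_mem_closure_rorbit [TopologicalSpace G]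
    (h : ∀ f : G → ℝ, BddRUC f →
      ¬ ((fun _ : G => (0 : ℝ)) ∈ closure (rorbit f) ∧
         (fun _ : G => (1 : ℝ)) ∈ closure (rorbit f))) :
    ¬ Ambitable G := fun hamb => by
  obtain ⟨f, hf, hsub⟩ := hamb _ isCRIP_zero
  exact h f hf ⟨hsub (const_mem_bLip_zero le_rfl zero_le_one),
    hsub (const_mem_bLip_zero zero_le_one le_rfl)⟩

end

theorem precompact_not_ambitable_general {G : Type u} [Group G] [TopologicalSpace G]
    (hpc : PrecompactGrp G) :
    ¬ Ambitable G ∧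
    ∀ f : G → ℝ, BddRUC f →
      ¬ ((fun _ : G => (0 : ℝ)) ∈ closure (rorbit f) ∧
         (fun _ : G => (1 : ℝ)) ∈ closure (rorbit f)) :=
  ⟨not_ambitable_of_forall_not_zero_and_one_mem_closure_rorbit
      fun _ hf => hpc.not_zero_and_one_mem_closure_rorbit hf,
    fun _ hf => hpc.not_zero_and_one_mem_closure_rorbit hf⟩

/-- no precompact topological group is ambitable; in fact for every
bounded right uniformly continuous `f`, the constants `0` and `1` cannot both lie in
the pointwise orbit closure of `f`. -/
theorem precompact_not_ambitable {G : Type u} [Group G] [TopologicalSpace G]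
    [IsTopologicalGroup G] (hpc : PrecompactGrp G) :
    ¬ Ambitable G ∧
    ∀ f : G → ℝ, BddRUC f →
      ¬ ((fun _ : G => (0 : ℝ)) ∈ closure (rorbit f) ∧
         (fun _ : G => (1 : ℝ)) ∈ closure (rorbit f)) :=
  precompact_not_ambitable_general hpc
end

section
/- For any pseudometric Δ on a group G, d(Δ) = lim_{k→∞} η♯(kΔ), i.e., the cardinals η♯(kΔ) form a nondecreasing sequence in k whose supremum equals the Δ-density d(Δ) (when d(Δ) is infinite; if d(Δ) is finite the sequence is eventually equal to it). -/
open Cardinal Topology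

universe u

/-! `η♯((k+1)Δ) ≤ d(Δ)` because a `Δ`-dense set is a `1/(k+1)`-net, and the sequence is
nondecreasing because a finer net is a coarser one. Conversely, if the sequence is bounded by
a finite `n`, pigeonhole against a fine enough net shows that any finite set of points at
pairwise positive distance has at most `n` points, so the quotient by the relation
`Δ x y = 0` has at most `n` elements and a set of representatives is dense. If the supremum
is infinite, the union of countably many optimal nets is dense. -/

open Filter Set

section

variable {α : Type u} {Δ : α → α → ℝ}

namespace IsPseudometric

theorem nonneg (hΔ : IsPseudometric Δ) (x y : α) : 0 ≤ Δ x y := by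
  have h := hΔ.2.2 x y x
  rw [hΔ.1 x, hΔ.2.1 y x] at h
  linarith

theorem const_mul (hΔ : IsPseudometric Δ) {c : ℝ} (hc : 0 ≤ c) :
    IsPseudometric fun x y => c * Δ x y :=
  ⟨fun x => by simp only [hΔ.1, mul_zero], fun x y => by simp only [hΔ.2.1 x y],
    fun x y z => by
      simp only [← mul_add]
      exact mul_le_mul_of_nonneg_left (hΔ.2.2 x y z) hc⟩

def zeroDistSetoid (hΔ : IsPseudometric Δ) : Setoid α where
  r x y := Δ x y = 0
  iseqv :=
    { refl := hΔ.1
      symm := fun h => (hΔ.2.1 _ _).trans h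
      trans := fun {x y z} hxy hyz =>
        le_antisymm ((hΔ.2.2 x y z).trans_eq (by rw [hxy, hyz, add_zero])) (hΔ.nonneg x z) }

end IsPseudometric

theorem etaSharp_le_mk {P : Set α} (hP : ∀ x, ∃ p ∈ P, Δ p x ≤ 1) : etaSharp Δ ≤ #P :=
  csInf_le' ⟨P, hP, rfl⟩

theorem dDens_le_mk {H : Set α} (hH : ∀ x : α, ∀ ε : ℝ, 0 < ε → ∃ h ∈ H, Δ x h < ε) :
    dDens Δ ≤ #H :=
  csInf_le' ⟨H, hH, rfl⟩

theorem IsPseudometric.exists_cover_mk_eq_etaSharp (hΔ : IsPseudometric Δ) :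
    ∃ P : Set α, (∀ x, ∃ p ∈ P, Δ p x ≤ 1) ∧ #P = etaSharp Δ := by
  obtain ⟨P, hP, hPc⟩ : etaSharp Δ ∈ {c | ∃ P : Set α, (∀ x, ∃ p ∈ P, Δ p x ≤ 1) ∧ c = #P} :=
    csInf_mem ⟨_, univ, fun x => ⟨x, mem_univ x, (hΔ.1 x).trans_le zero_le_one⟩, rfl⟩
  exact ⟨P, hP, hPc.symm⟩

theorem IsPseudometric.exists_dense_mk_eq_dDens (hΔ : IsPseudometric Δ) :
    ∃ H : Set α, (∀ x : α, ∀ ε : ℝ, 0 < ε → ∃ h ∈ H, Δ x h < ε) ∧ #H = dDens Δ := by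
  obtain ⟨H, hH, hHc⟩ : dDens Δ ∈
      {c | ∃ H : Set α, (∀ x : α, ∀ ε : ℝ, 0 < ε → ∃ h ∈ H, Δ x h < ε) ∧ c = #H} :=
    csInf_mem ⟨_, univ, fun x ε hε => ⟨x, mem_univ x, (hΔ.1 x).trans_lt hε⟩, rfl⟩
  exact ⟨H, hH, hHc.symm⟩

theorem etaSharp_mono {Δ₁ Δ₂ : α → α → ℝ} (hΔ₂ : IsPseudometric Δ₂)
    (hle : ∀ x y, Δ₁ x y ≤ Δ₂ x y) : etaSharp Δ₁ ≤ etaSharp Δ₂ := by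
  obtain ⟨P, hP, hPc⟩ := hΔ₂.exists_cover_mk_eq_etaSharp
  exact hPc ▸ etaSharp_le_mk fun x =>
    (hP x).imp fun p ⟨hp, hpx⟩ => ⟨hp, (hle p x).trans hpx⟩

namespace IsPseudometric

theorem etaSharp_const_mul_le_dDens (hΔ : IsPseudometric Δ) {c : ℝ} (hc : 0 < c) :
    etaSharp (fun x y => c * Δ x y) ≤ dDens Δ := by
  obtain ⟨H, hH, hHc⟩ := hΔ.exists_dense_mk_eq_dDens
  refine hHc ▸ etaSharp_le_mk fun x => ?_
  obtain ⟨h, hh, hxh⟩ := hH x c⁻¹ (inv_pos.2 hc)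
  refine ⟨h, hh, ?_⟩
  have := mul_lt_mul_of_pos_left hxh hc
  rw [mul_inv_cancel₀ hc.ne', hΔ.2.1] at this
  exact this.le

theorem card_le_mk_of_cover (hΔ : IsPseudometric Δ) {F : Finset α}
    (hF : ∀ a ∈ F, ∀ b ∈ F, a ≠ b → 2 < Δ a b) {P : Set α} (hP : ∀ x, ∃ p ∈ P, Δ p x ≤ 1) :
    (F.card : Cardinal) ≤ #P := by
  choose p hpP hp using hP
  have hinj : Function.Injective fun a : F => (⟨p a, hpP a⟩ : P) := by
    rintro ⟨a, ha⟩ ⟨b, hb⟩ hab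
    by_contra hne
    have hsep := hF a ha b hb fun h => hne (Subtype.ext h)
    have hpab : p a = p b := congrArg Subtype.val hab
    have hpb : Δ (p a) b ≤ 1 := hpab ▸ hp b
    have htri := hΔ.2.2 a (p a) b
    rw [hΔ.2.1 a (p a)] at htri
    linarith [hp a]
  simpa using mk_le_of_injective hinj

theorem card_le_of_forall_etaSharp_le (hΔ : IsPseudometric Δ) {n : ℕ}
    (hη : ∀ k : ℕ, etaSharp (fun x y => ((k : ℝ) + 1) * Δ x y) ≤ n) {F : Finset α}
    (hF : ∀ a ∈ F, ∀ b ∈ F, a ≠ b → 0 < Δ a b) : F.card ≤ n := by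
  classical
  have hfine : ∀ᶠ k : ℕ in atTop, ∀ q ∈ F.offDiag, 2 < ((k : ℝ) + 1) * Δ q.1 q.2 := by
    refine (eventually_all_finset _).2 fun q hq => ?_
    obtain ⟨ha, hb, hne⟩ := Finset.mem_offDiag.1 hq
    exact ((tendsto_natCast_atTop_atTop.atTop_add tendsto_const_nhds).atTop_mul_const
      (hF _ ha _ hb hne)).eventually_gt_atTop 2
  obtain ⟨k, hk⟩ := hfine.exists
  have hΔk := hΔ.const_mul (k.cast_add_one_pos (α := ℝ)).le
  obtain ⟨P, hP, hPk⟩ := hΔk.exists_cover_mk_eq_etaSharp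
  have := hΔk.card_le_mk_of_cover
    (fun a ha b hb hab => hk (a, b) (Finset.mem_offDiag.2 ⟨ha, hb, hab⟩)) hP
  exact_mod_cast this.trans (hPk ▸ hη k)

theorem dDens_le_of_forall_card_le (hΔ : IsPseudometric Δ) {n : ℕ}
    (h : ∀ F : Finset α, (∀ a ∈ F, ∀ b ∈ F, a ≠ b → 0 < Δ a b) → F.card ≤ n) :
    dDens Δ ≤ n := by
  classical
  let s := hΔ.zeroDistSetoid
  have hQ : ∀ T : Finset (Quotient s), T.card ≤ n := by
    intro T
    rw [← T.card_image_of_injective Quotient.out_injective]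
    refine h _ ?_
    simp only [Finset.mem_image]
    rintro _ ⟨a, -, rfl⟩ _ ⟨b, -, rfl⟩ hab
    refine (hΔ.nonneg _ _).lt_of_ne' fun h0 => hab ?_
    rw [← Quotient.out_eq a, ← Quotient.out_eq b, Quotient.sound (s := s) h0]
  have : Finite (Quotient s) := by
    by_contra hinf
    have := not_finite_iff_infinite.1 hinf
    obtain ⟨T, hT⟩ := Infinite.exists_subset_card_eq (Quotient s) (n + 1)
    have := hQ T
    omega
  have := Fintype.ofFinite (Quotient s)
  calc dDens Δ ≤ #(range (Quotient.out : Quotient s → α)) :=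
        dDens_le_mk fun x ε hε => ⟨_, mem_range_self (Quotient.mk s x), by
          rw [hΔ.2.1, show Δ _ x = 0 from Quotient.mk_out x]; exact hε⟩
    _ ≤ #(Quotient s) := mk_range_le
    _ ≤ n := by rw [mk_fintype]; exact_mod_cast hQ Finset.univ

theorem dDens_le_aleph0_mul_iSup_etaSharp (hΔ : IsPseudometric Δ) :
    dDens Δ ≤ ℵ₀ * ⨆ k : ℕ, etaSharp (fun x y => ((k : ℝ) + 1) * Δ x y) := by
  choose P hP hPk using fun k : ℕ =>
    (hΔ.const_mul (k.cast_add_one_pos (α := ℝ)).le).exists_cover_mk_eq_etaSharp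
  calc dDens Δ ≤ #(⋃ k, P k) := dDens_le_mk fun x ε hε => ?_
    _ ≤ ℵ₀ * ⨆ k, #(P k) := by simpa using mk_iUnion_le_lift P
    _ = _ := by simp only [hPk]
  obtain ⟨k, hk⟩ := exists_nat_one_div_lt hε
  obtain ⟨p, hp, hpx⟩ := hP k x
  refine ⟨p, mem_iUnion.2 ⟨k, hp⟩, ?_⟩
  rw [hΔ.2.1]
  exact ((le_div_iff₀' k.cast_add_one_pos).2 hpx).trans_lt hk

theorem dDens_eq_iSup_etaSharp (hΔ : IsPseudometric Δ) :
    dDens Δ = ⨆ k : ℕ, etaSharp (fun x y => ((k : ℝ) + 1) * Δ x y) := by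
  refine le_antisymm ?_ (ciSup_le' fun k => hΔ.etaSharp_const_mul_le_dDens k.cast_add_one_pos)
  rcases lt_or_ge (⨆ k : ℕ, etaSharp (fun x y => ((k : ℝ) + 1) * Δ x y)) ℵ₀ with hfin | hinf
  · obtain ⟨m, hm⟩ := lt_aleph0.1 hfin
    rw [hm]
    exact hΔ.dDens_le_of_forall_card_le fun _ => hΔ.card_le_of_forall_etaSharp_le fun k =>
      hm ▸ le_ciSup (bddAbove_of_small) k
  · exact hΔ.dDens_le_aleph0_mul_iSup_etaSharp.trans (aleph0_mul_eq hinf).le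

end IsPseudometric

end

theorem dDens_eq_limit_etaSharp_general {G : Type u} (Δ : G → G → ℝ)
    (hΔ : IsPseudometric Δ) :
    (∀ j k : ℕ, j ≤ k →
      etaSharp (fun x y => ((j : ℝ) + 1) * Δ x y) ≤
        etaSharp (fun x y => ((k : ℝ) + 1) * Δ x y)) ∧
    (Cardinal.aleph0 ≤ dDens Δ →
      dDens Δ = ⨆ k : ℕ, etaSharp (fun x y => ((k : ℝ) + 1) * Δ x y)) ∧
    (dDens Δ < Cardinal.aleph0 →
      ∃ K : ℕ, ∀ k : ℕ, K ≤ k →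
        etaSharp (fun x y => ((k : ℝ) + 1) * Δ x y) = dDens Δ) := by
  have hmono : ∀ j k : ℕ, j ≤ k →
      etaSharp (fun x y => ((j : ℝ) + 1) * Δ x y) ≤
        etaSharp (fun x y => ((k : ℝ) + 1) * Δ x y) := fun j k hjk =>
    etaSharp_mono (hΔ.const_mul (k.cast_add_one_pos (α := ℝ)).le) fun x y =>
      mul_le_mul_of_nonneg_right (by gcongr) (hΔ.nonneg x y)
  have hsup := hΔ.dDens_eq_iSup_etaSharp
  refine ⟨hmono, fun _ => hsup, fun hfin => ?_⟩
  obtain ⟨K, hK⟩ := exists_eq_ciSup_of_not_isSuccLimit (bddAbove_of_small)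
    (not_isSuccLimit_of_lt_aleph0 (hsup ▸ hfin))
  refine ⟨K, fun k hk => le_antisymm (hΔ.etaSharp_const_mul_le_dDens k.cast_add_one_pos) ?_⟩
  rw [hsup, ← hK]
  exact hmono K k hk

/-- `d(Δ) = lim_k η♯(kΔ)`: the sequence `η♯(kΔ)` is nondecreasing;
if `d(Δ)` is infinite it equals the supremum, and if `d(Δ)` is finite the sequence is
eventually equal to it. -/
theorem dDens_eq_limit_etaSharp {G : Type u} [Group G] (Δ : G → G → ℝ)
    (hΔ : IsPseudometric Δ) :
    (∀ j k : ℕ, j ≤ k →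
      etaSharp (fun x y => ((j : ℝ) + 1) * Δ x y) ≤
        etaSharp (fun x y => ((k : ℝ) + 1) * Δ x y)) ∧
    (Cardinal.aleph0 ≤ dDens Δ →
      dDens Δ = ⨆ k : ℕ, etaSharp (fun x y => ((k : ℝ) + 1) * Δ x y)) ∧
    (dDens Δ < Cardinal.aleph0 →
      ∃ K : ℕ, ∀ k : ℕ, K ≤ k →
        etaSharp (fun x y => ((k : ℝ) + 1) * Δ x y) = dDens Δ) :=
  dDens_eq_limit_etaSharp_general Δ hΔ
end

section
/- Let G be a group, P ⊆ G, and A₁, …, A_n ⊆ G with G = ⋃_{k=1}^n A_k P. Then there exist a set P' ⊆ G and an index j (1 ≤ j ≤ n) such that G = A_j⁻¹ A_j P', where P' is finite if P is finite, and |P'| ≤ |P| if P is infinite. -/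
/-!
Induct on the number of pieces. If `G = A⁻¹ A Q` for a piece `A` we are done; otherwise pick
`x ∉ A⁻¹ A Q`. Then every `y ∈ A Q` lies in the union `B` of the other pieces times `Q x⁻¹ Q`: write `y = a p` and `a x = b q`;
here `b ∉ A`, since otherwise `x = a⁻¹ b q ∈ A⁻¹ A Q`, so `y = b (q x⁻¹ p)`. Hence `G = B Q'` with
`Q' = Q ∪ Q x⁻¹ Q`, which is finite if `Q` is and no larger than `Q` if `Q` is infinite, and the
remaining pieces cover `G` with the new set of translates. The size condition is carried
through the induction as `P'.Finite ∨ #P' ≤ #Q`, which is transitive.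
-/

open Cardinal Topology

universe u

open Pointwise

namespace Set

variable {α : Type*}

theorem finite_or_mk_le_trans {s t r : Set α} (hst : s.Finite ∨ #s ≤ #t)
    (htr : t.Finite ∨ #t ≤ #r) : s.Finite ∨ #s ≤ #r := by
  rcases hst with hs | hst
  · exact Or.inl hs
  rcases htr with ht | htr
  · exact Or.inl (lt_aleph0_iff_set_finite.1 (hst.trans_lt ht.lt_aleph0))
  · exact Or.inr (hst.trans htr)

theorem finite_or_mk_le_iff {s t : Set α} :
    s.Finite ∨ #s ≤ #t ↔ (t.Finite → s.Finite) ∧ (t.Infinite → #s ≤ #t) := by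
  refine ⟨fun h => ⟨fun ht => ?_, fun ht => ?_⟩, fun ⟨hfin, hinf⟩ => (em t.Finite).imp hfin hinf⟩
  · rcases h with hs | hst
    · exact hs
    · exact lt_aleph0_iff_set_finite.1 (hst.trans_lt ht.lt_aleph0)
  · rcases h with hs | hst
    · exact hs.lt_aleph0.le.trans (aleph0_le_mk_iff.2 ht.to_subtype)
    · exact hst

end Set

section Group

variable {G : Type*} [Group G]

theorem finite_or_mk_union_mul_smul_le (Q : Set G) (x : G) :
    (Q ∪ Q * (x • Q)).Finite ∨ #↥(Q ∪ Q * (x • Q)) ≤ #Q := by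
  by_cases hQ : Q.Finite
  · exact Or.inl (hQ.union (hQ.mul hQ.smul_set))
  · have hℵ₀ : ℵ₀ ≤ #Q := aleph0_le_mk_iff.2 (Set.infinite_coe_iff.2 hQ)
    refine Or.inr ?_
    calc #↥(Q ∪ Q * (x • Q)) ≤ #Q + #Q * #↥(x • Q) :=
          (mk_union_le _ _).trans (add_le_add le_rfl mk_mul_le)
      _ = #Q := by rw [mk_smul_set, mul_eq_self hℵ₀, add_eq_self hℵ₀]

theorem mul_union_mul_smul_eq_univ {A B Q : Set G} (hcov : (A ∪ B) * Q = Set.univ) {x : G}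
    (hx : x ∉ A⁻¹ * A * Q) : B * (Q ∪ Q * (x⁻¹ • Q)) = Set.univ := by
  have hmem (z : G) : z ∈ (A ∪ B) * Q := hcov ▸ Set.mem_univ z
  refine Set.eq_univ_of_forall fun y => ?_
  obtain ⟨a, ha | ha, p, hp, rfl⟩ := Set.mem_mul.1 (hmem y)
  · obtain ⟨b, hb | hb, q, hq, hbq⟩ := Set.mem_mul.1 (hmem (a * x))
    · refine absurd (Set.mem_mul.2 ⟨a⁻¹ * b, Set.mul_mem_mul (Set.inv_mem_inv.2 ha) hb, q, hq, ?_⟩) hx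
      rw [mul_assoc, hbq, inv_mul_cancel_left]
    · have hqp : q * (x⁻¹ * p) ∈ Q * (x⁻¹ • Q) := Set.mul_mem_mul hq (Set.smul_mem_smul_set hp)
      refine Set.mem_mul.2 ⟨b, hb, q * (x⁻¹ * p), Or.inr hqp, ?_⟩
      rw [← mul_assoc, ← mul_assoc, hbq, mul_inv_cancel_right]
  · exact Set.mul_mem_mul ha (Or.inl hp)

theorem exists_inv_mul_self_mul_eq_univ {ι : Type*} (s : Finset ι) (A : ι → Set G) (Q : Set G)
    (hcov : (⋃ i ∈ s, A i) * Q = Set.univ) :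
    ∃ j ∈ s, ∃ P' : Set G, (A j)⁻¹ * A j * P' = Set.univ ∧ (P'.Finite ∨ #P' ≤ #Q) := by
  classical
  induction s using Finset.induction_on generalizing Q with
  | empty =>
    simp only [Finset.notMem_empty, Set.iUnion_of_empty, Set.iUnion_empty, Set.empty_mul] at hcov
    exact absurd hcov.symm Set.univ_nonempty.ne_empty
  | insert j s _ ih =>
    rw [Finset.set_biUnion_insert] at hcov
    by_cases hj : (A j)⁻¹ * A j * Q = Set.univ
    · exact ⟨j, Finset.mem_insert_self j s, Q, hj, Or.inr le_rfl⟩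
    obtain ⟨x, hx⟩ := (Set.ne_univ_iff_exists_notMem _).1 hj
    obtain ⟨i, hi, P', hP', hcard⟩ := ih _ (mul_union_mul_smul_eq_univ hcov hx)
    exact ⟨i, Finset.mem_insert_of_mem hi, P', hP',
      Set.finite_or_mk_le_trans hcard (finite_or_mk_union_mul_smul_le Q x⁻¹)⟩

end Group

/-- if `G = ⋃_{k=1}^n A_k P` then `G = A_j⁻¹ A_j P'` for some `j` and some
`P'` which is finite if `P` is, and of cardinality at most `|P|` if `P` is infinite. -/
theorem partition_lemma {G : Type u} [Group G] (P : Set G) (n : ℕ)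
    (A : Fin n → Set G)
    (hcov : ∀ x : G, ∃ k : Fin n, ∃ a ∈ A k, ∃ p ∈ P, x = a * p) :
    ∃ P' : Set G, ∃ j : Fin n,
      (∀ x : G, ∃ a ∈ A j, ∃ a' ∈ A j, ∃ p ∈ P', x = a⁻¹ * a' * p) ∧
      (P.Finite → P'.Finite) ∧
      (P.Infinite → Cardinal.mk P' ≤ Cardinal.mk P) := by
  have hcov' : (⋃ k ∈ Finset.univ, A k) * P = Set.univ := by
    refine Set.eq_univ_of_forall fun x => ?_
    obtain ⟨k, a, ha, p, hp, rfl⟩ := hcov x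
    exact Set.mul_mem_mul (Set.mem_iUnion₂.2 ⟨k, Finset.mem_univ k, ha⟩) hp
  obtain ⟨j, -, P', hP', hcard⟩ := exists_inv_mul_self_mul_eq_univ Finset.univ A P hcov'
  refine ⟨P', j, fun x => ?_, Set.finite_or_mk_le_iff.1 hcard⟩
  obtain ⟨b, hb, p, hp, rfl⟩ := Set.mem_mul.1 (hP' ▸ Set.mem_univ x)
  obtain ⟨a, ha, a', ha', rfl⟩ := Set.mem_mul.1 hb
  exact ⟨a⁻¹, ha, a', ha', p, hp, by rw [inv_inv]⟩
end

section
/- Let G be a topological group and Δ a continuous right-invariant pseudometric on G. If Δ♭(Δ) is finite then η♯(½Δ) is finite, and if Δ♭(Δ) is infinite then η♯(½Δ) ≤ Δ♭(Δ). -/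
open Cardinal Topology

universe u

/-!
If `P` and a finite `Q` witness `Δ♭(Δ)`, either `P` is already a `2`-net or some `g` lies at
distance `> 2` from `P`. In the latter case fix `q₀ ∈ Q`: whenever `Δ(t, q₀x) ≤ 1`, right
translation by `t⁻¹g` moves `x` to a point `y` with `Δ(g, q₀y) ≤ 1`, and `y` must be covered by some
`q₁ ≠ q₀`, say `Δ(s, q₁y) ≤ 1`; translating back, `Δ(s g⁻¹ t, q₁x) ≤ 1`. So `P ∪ P g⁻¹ P` and
`Q \ {q₀}` still cover, and induction on `|Q|` ends with a `2`-net no larger than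
`max(|P|, ℵ₀)` (finite if `P` is).
-/

open scoped Pointwise

lemma etaSharp_half_le_mk {G : Type u} {Δ : G → G → ℝ} {P : Set G}
    (hP : ∀ x : G, ∃ p ∈ P, Δ p x ≤ 2) :
    etaSharp (fun x y => Δ x y / 2) ≤ #P :=
  csInf_le (OrderBot.bddBelow _) ⟨P, fun x => (hP x).imp fun _ ⟨hp, h⟩ => ⟨hp, by linarith⟩, rfl⟩

section TwoNet

variable {G : Type u} [Group G] {Δ : G → G → ℝ}

lemma exists_deltaFlat_witness (hΔ : IsPseudometric Δ) :
    ∃ P Q : Set G, Q.Finite ∧ (∀ x : G, ∃ q ∈ Q, ∃ p ∈ P, Δ p (q * x) ≤ 1) ∧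
      #P = deltaFlat Δ := by
  have hne : {c | ∃ P : Set G, (∃ Q : Set G, Q.Finite ∧
      ∀ x : G, ∃ q ∈ Q, ∃ p ∈ P, Δ p (q * x) ≤ 1) ∧ c = #P}.Nonempty :=
    ⟨_, Set.univ, ⟨{1}, Set.finite_singleton 1, fun x =>
      ⟨1, rfl, x, trivial, by rw [one_mul, hΔ.1 x]; exact zero_le_one⟩⟩, rfl⟩
  obtain ⟨P, ⟨Q, hQ, hcov⟩, hP⟩ := csInf_mem hne
  exact ⟨P, Q, hQ, hcov, hP.symm⟩

lemma cover_erase_of_far (hΔ : IsPseudometric Δ) (hri : RightInvariant Δ) {q₀ : G}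
    {Q S : Set G} (hcov : ∀ x : G, ∃ q ∈ insert q₀ Q, ∃ s ∈ S, Δ s (q * x) ≤ 1)
    {g : G} (hg : ∀ s ∈ S, 2 < Δ s g) :
    ∀ x : G, ∃ q ∈ Q, ∃ s ∈ S ∪ S * {g⁻¹} * S, Δ s (q * x) ≤ 1 := by
  intro x
  obtain ⟨q, hq, t, ht, hqx⟩ := hcov x
  rcases hq with rfl | hq
  · obtain ⟨q₁, hq₁, s, hs, hq₁y⟩ := hcov (x * (t⁻¹ * g))
    have hgy : Δ g (q * (x * (t⁻¹ * g))) ≤ 1 := by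
      simpa [mul_assoc] using (hri t (q * x) (t⁻¹ * g)).le.trans hqx
    rcases hq₁ with rfl | hq₁
    · have htri := hΔ.2.2 s (q₁ * (x * (t⁻¹ * g))) g
      have hsymm := hΔ.2.1 (q₁ * (x * (t⁻¹ * g))) g
      linarith [hg s hs]
    · refine ⟨q₁, hq₁, s * g⁻¹ * t, Or.inr (Set.mul_mem_mul (Set.mul_mem_mul hs rfl) ht), ?_⟩
      simpa [mul_assoc] using (hri s (q₁ * (x * (t⁻¹ * g))) (g⁻¹ * t)).le.trans hq₁y
  · exact ⟨q, hq, t, Or.inl ht, hqx⟩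

lemma exists_two_net_of_cover (hΔ : IsPseudometric Δ) (hri : RightInvariant Δ)
    {p : Set G → Prop} (hp : ∀ S g, p S → p (S ∪ S * {g} * S)) {Q : Set G} (hQ : Q.Finite)
    {S : Set G} (hS : p S) (hcov : ∀ x : G, ∃ q ∈ Q, ∃ s ∈ S, Δ s (q * x) ≤ 1) :
    ∃ P, p P ∧ ∀ x : G, ∃ c ∈ P, Δ c x ≤ 2 := by
  classical
  lift Q to Finset G using hQ
  induction Q using Finset.induction_on generalizing S with
  | empty => simp at hcov
  | insert q₀ Q _ ih =>
    by_cases hnet : ∀ x : G, ∃ c ∈ S, Δ c x ≤ 2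
    · exact ⟨S, hS, hnet⟩
    push Not at hnet
    obtain ⟨g, hg⟩ := hnet
    rw [Finset.coe_insert] at hcov
    exact ih (hp S g⁻¹ hS) (cover_erase_of_far hΔ hri hcov hg)

end TwoNet

lemma Cardinal.mk_union_mul_singleton_mul_le {G : Type u} [Mul G] {S : Set G}
    {μ : Cardinal.{u}} (hμ : ℵ₀ ≤ μ) (hS : #S ≤ μ) (g : G) : #(S ∪ S * {g} * S : Set G) ≤ μ :=
  calc #(S ∪ S * {g} * S : Set G) ≤ #S + #S * #({g} : Set G) * #S :=
        (mk_union_le _ _).trans (add_le_add_right (mk_mul_le.trans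
          (mul_le_mul_left mk_mul_le _)) _)
    _ ≤ μ + μ * 1 * μ := by gcongr; simp
    _ = μ := by rw [mul_one, mul_eq_self hμ, add_eq_self hμ]

theorem etaSharp_half_le_deltaFlat_general {G : Type u} [Group G] [TopologicalSpace G]
    (Δ : G → G → ℝ) (hΔ : IsCRIP Δ) :
    (deltaFlat Δ < Cardinal.aleph0 →
      etaSharp (fun x y => Δ x y / 2) < Cardinal.aleph0) ∧
    (Cardinal.aleph0 ≤ deltaFlat Δ →
      etaSharp (fun x y => Δ x y / 2) ≤ deltaFlat Δ) := by
  obtain ⟨hΔ, hri, -⟩ := hΔ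
  obtain ⟨P, Q, hQ, hcov, hP⟩ := exists_deltaFlat_witness hΔ
  rw [← hP]
  refine ⟨fun hfin => ?_, fun hinf => ?_⟩
  · rw [lt_aleph0_iff_set_finite] at hfin
    obtain ⟨P', hP', hnet⟩ := exists_two_net_of_cover (p := Set.Finite) hΔ hri
      (fun S g hS => hS.union ((hS.mul (Set.finite_singleton g)).mul hS)) hQ hfin hcov
    exact (etaSharp_half_le_mk hnet).trans_lt (lt_aleph0_iff_set_finite.2 hP')
  · obtain ⟨P', hP', hnet⟩ := exists_two_net_of_cover (p := fun S => #S ≤ #P) hΔ hri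
      (fun S g hS => mk_union_mul_singleton_mul_le hinf hS g) hQ le_rfl hcov
    exact (etaSharp_half_le_mk hnet).trans hP'

/-- if `Δ♭(Δ)` is finite then `η♯(½Δ)` is finite; if `Δ♭(Δ)` is infinite
then `η♯(½Δ) ≤ Δ♭(Δ)`. -/
theorem etaSharp_half_le_deltaFlat {G : Type u} [Group G] [TopologicalSpace G]
    [IsTopologicalGroup G] (Δ : G → G → ℝ) (hΔ : IsCRIP Δ) :
    (deltaFlat Δ < Cardinal.aleph0 →
      etaSharp (fun x y => Δ x y / 2) < Cardinal.aleph0) ∧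
    (Cardinal.aleph0 ≤ deltaFlat Δ →
      etaSharp (fun x y => Δ x y / 2) ≤ deltaFlat Δ) :=
  etaSharp_half_le_deltaFlat_general Δ hΔ
end

section
/- A topological group G is precompact if and only if Δ♭(Δ) is finite for every continuous right-invariant pseudometric Δ on G. (Equivalently: G is precompact iff for every neighbourhood B of the identity there exist finite sets Q, P ⊆ G with G = QBP.) -/
open Cardinal Topology

universe u

/-! Precompactness gives finite `P` already with `Q = {1}`. Conversely, with `Δ_q(u, v) = Δ(qu, qv)`
the hypothesis covers `G` by finitely many balls of radius `r` of the right-invariant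
pseudometrics `Δ_q`, `q ∈ Q`. A B. H. Neumann–style induction on the set of these pseudometrics
shows that one of them has a finite `2r`-net: if `Δ_q` has none, some point `y` is `2r`-far from
all centres, and right translation moves every `Δ_q`-ball of the cover onto a ball around `y`,
which is covered by the balls of the other pseudometrics. A `2r`-net of `Δ_q` translated by `q`
is a `2r`-net of `Δ`. -/

section Pseudometric

variable {G : Type u}

lemma IsPseudometric.comp {H : Type*} {Δ : G → G → ℝ} (hΔ : IsPseudometric Δ) (f : H → G) :
    IsPseudometric fun u v => Δ (f u) (f v) :=
  ⟨fun x => hΔ.1 (f x), fun x y => hΔ.2.1 (f x) (f y), fun x y z => hΔ.2.2 (f x) (f y) (f z)⟩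

lemma IsPseudometric.const_mul_s11 {Δ : G → G → ℝ} (hΔ : IsPseudometric Δ) {c : ℝ} (hc : 0 ≤ c) :
    IsPseudometric fun u v => c * Δ u v := by
  refine ⟨fun x => by simp [hΔ.1 x], fun x y => by simp only [hΔ.2.1 x y], fun x y z => ?_⟩
  have := mul_le_mul_of_nonneg_left (hΔ.2.2 x y z) hc
  dsimp only
  linarith

variable [Group G]

lemma RightInvariant.comp_mul_left {Δ : G → G → ℝ} (hΔ : RightInvariant Δ) (q : G) :
    RightInvariant fun u v => Δ (q * u) (q * v) := by
  intro z z' x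
  simp only [← mul_assoc]
  exact hΔ _ _ _

lemma RightInvariant.const_mul_s11 {Δ : G → G → ℝ} (hΔ : RightInvariant Δ) (c : ℝ) :
    RightInvariant fun u v => c * Δ u v := by
  intro z z' x
  simp only [hΔ z z' x]

lemma IsCRIP.const_mul_s11 [TopologicalSpace G] {Δ : G → G → ℝ} (hΔ : IsCRIP Δ) {c : ℝ}
    (hc : 0 ≤ c) : IsCRIP fun u v => c * Δ u v :=
  ⟨hΔ.1.const_mul_s11 hc, hΔ.2.1.const_mul_s11 c, continuous_const.mul hΔ.2.2⟩

end Pseudometric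

section NeumannCover

variable {G : Type u} [Group G] {ι : Type*} {d : ι → G → G → ℝ} {r : ℝ}

lemma exists_cover_avoiding_of_not_finite_net
    (hd : ∀ i, IsPseudometric (d i) ∧ RightInvariant (d i))
    {S : Set (ι × G)} (hS : S.Finite) (hcov : ∀ x, ∃ p ∈ S, d p.1 p.2 x ≤ r) (i : ι)
    (hnet : ¬ ∃ F : Set G, F.Finite ∧ ∀ x, ∃ c ∈ F, d i c x ≤ 2 * r) :
    ∃ S' : Set (ι × G), S'.Finite ∧ Prod.fst '' S' ⊆ Prod.fst '' S \ {i} ∧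
      ∀ x, ∃ p ∈ S', d p.1 p.2 x ≤ r := by
  obtain ⟨y, hy⟩ : ∃ y, ∀ p ∈ S, 2 * r < d i p.2 y := by
    by_contra! h
    exact hnet ⟨_, hS.image Prod.snd, fun x => by
      obtain ⟨p, hp, hpx⟩ := h x
      exact ⟨p.2, ⟨p, hp, rfl⟩, hpx⟩⟩
  set S₀ := {p ∈ S | p.1 ≠ i}
  have hS₀ : S₀.Finite := hS.subset (Set.sep_subset _ _)
  refine ⟨S₀ ∪ (fun pq : (ι × G) × (ι × G) => (pq.1.1, pq.1.2 * (y⁻¹ * pq.2.2))) '' (S₀ ×ˢ S),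
    hS₀.union ((hS₀.prod hS).image _), ?_, fun x => ?_⟩
  · rintro _ ⟨p, hp | ⟨pq, hpq, rfl⟩, rfl⟩
    · exact ⟨⟨p, hp.1, rfl⟩, hp.2⟩
    · obtain ⟨hp', hp'i⟩ := (Set.mem_prod.1 hpq).1
      exact ⟨⟨pq.1, hp', rfl⟩, hp'i⟩
  obtain ⟨p, hp, hpx⟩ := hcov x
  by_cases hpi : p.1 = i
  swap
  · exact ⟨p, Or.inl ⟨hp, hpi⟩, hpx⟩
  subst hpi
  -- `z` is the image of `x` under the right translation moving the centre `p.2` to `y`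
  set z := x * (p.2⁻¹ * y)
  have hyz : d p.1 y z ≤ r := by
    rwa [← mul_inv_cancel_left p.2 y, (hd p.1).2]
  obtain ⟨p', hp', hp'z⟩ := hcov z
  have hp'i : p'.1 ≠ p.1 := by
    intro h
    rw [h] at hp'z
    have := (hd p.1).1.2.2 p'.2 z y
    have := (hd p.1).1.2.1 z y
    linarith [hy p' hp']
  refine ⟨_, Or.inr ⟨(p', p), ⟨⟨hp', hp'i⟩, hp⟩, rfl⟩, ?_⟩
  have hx : x = z * (y⁻¹ * p.2) := by simp [z, mul_assoc]
  rwa [hx, (hd p'.1).2]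

theorem exists_finite_net_of_finite_ball_cover
    (hd : ∀ i, IsPseudometric (d i) ∧ RightInvariant (d i))
    {S : Set (ι × G)} (hS : S.Finite) (hcov : ∀ x, ∃ p ∈ S, d p.1 p.2 x ≤ r) :
    ∃ i, ∃ F : Set G, F.Finite ∧ ∀ x, ∃ c ∈ F, d i c x ≤ 2 * r := by
  classical
  suffices ∀ I : Finset ι, ∀ S : Set (ι × G), S.Finite → Prod.fst '' S ⊆ I →
      (∀ x, ∃ p ∈ S, d p.1 p.2 x ≤ r) → ∃ i, ∃ F : Set G, F.Finite ∧ ∀ x, ∃ c ∈ F, d i c x ≤ 2 * r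
    from this (hS.image Prod.fst).toFinset S hS (by simp) hcov
  intro I
  induction I using Finset.induction_on with
  | empty =>
    intro S _ hI hcov
    obtain ⟨p, hp, -⟩ := hcov 1
    simpa using hI ⟨p, hp, rfl⟩
  | insert i I _ ih =>
    intro S hS hI hcov
    by_cases hnet : ∃ F : Set G, F.Finite ∧ ∀ x, ∃ c ∈ F, d i c x ≤ 2 * r
    · exact ⟨i, hnet⟩
    obtain ⟨S', hS', hS'S, hcov'⟩ := exists_cover_avoiding_of_not_finite_net hd hS hcov i hnet
    refine ih S' hS' (fun j hj => ?_) hcov'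
    obtain ⟨hjS, hji⟩ := hS'S hj
    have hj := hI hjS
    rw [Finset.coe_insert, Set.mem_insert_iff] at hj
    exact hj.resolve_left hji

theorem exists_finite_net_of_translate_cover {Δ : G → G → ℝ} (hps : IsPseudometric Δ)
    (hri : RightInvariant Δ) {Q P : Set G} (hQ : Q.Finite) (hP : P.Finite)
    (hcov : ∀ x, ∃ q ∈ Q, ∃ p ∈ P, Δ p (q * x) ≤ r) :
    ∃ F : Set G, F.Finite ∧ ∀ x, ∃ c ∈ F, Δ c x ≤ 2 * r := by
  have hd (q : G) : IsPseudometric (fun u v => Δ (q * u) (q * v)) ∧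
      RightInvariant (fun u v => Δ (q * u) (q * v)) :=
    ⟨hps.comp (q * ·), hri.comp_mul_left q⟩
  obtain ⟨q, F, hF, hnet⟩ := exists_finite_net_of_finite_ball_cover hd
    ((hQ.prod hP).image fun qp : G × G => (qp.1, qp.1⁻¹ * qp.2)) fun x => by
      obtain ⟨q, hq, p, hp, hpx⟩ := hcov x
      exact ⟨_, ⟨(q, p), ⟨hq, hp⟩, rfl⟩, by simpa using hpx⟩
  refine ⟨(q * ·) '' F, hF.image _, fun x => ?_⟩
  obtain ⟨c, hc, hcx⟩ := hnet (q⁻¹ * x)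
  exact ⟨q * c, ⟨c, hc, rfl⟩, by simpa using hcx⟩

end NeumannCover

section Cardinals

variable {G : Type u}

lemma exists_finite_of_sInf_mk_lt_aleph0 {p : Set G → Prop}
    (h : sInf {c | ∃ P, p P ∧ c = #P} < ℵ₀) (hp : ∃ P, p P) : ∃ P, p P ∧ P.Finite := by
  obtain ⟨P, hP, hc⟩ := csInf_mem (s := {c | ∃ P, p P ∧ c = #P}) (by
    obtain ⟨P, hP⟩ := hp
    exact ⟨_, P, hP, rfl⟩)
  exact ⟨P, hP, lt_aleph0_iff_set_finite.1 (hc ▸ h)⟩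

lemma etaSharp_lt_aleph0_of_finite {Δ : G → G → ℝ} {F : Set G} (hF : F.Finite)
    (hcov : ∀ x, ∃ p ∈ F, Δ p x ≤ 1) : etaSharp Δ < ℵ₀ :=
  (csInf_le' (s := {c | ∃ P : Set G, (∀ x, ∃ p ∈ P, Δ p x ≤ 1) ∧ c = #P}) ⟨F, hcov, rfl⟩).trans_lt
    (lt_aleph0_iff_set_finite.2 hF)

variable [Group G]

lemma deltaFlat_le_etaSharp {Δ : G → G → ℝ} (hΔ : ∀ x, Δ x x ≤ 1) : deltaFlat Δ ≤ etaSharp Δ :=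
  le_csInf ⟨_, Set.univ, fun x => ⟨x, trivial, hΔ x⟩, rfl⟩ <| by
    rintro _ ⟨P, hP, rfl⟩
    exact csInf_le' ⟨P, ⟨{1}, Set.finite_singleton 1, fun x => ⟨1, rfl, by simpa using hP x⟩⟩, rfl⟩

lemma exists_finite_of_deltaFlat_lt_aleph0 {Δ : G → G → ℝ} (hΔ : ∀ x, Δ x x ≤ 1)
    (h : deltaFlat Δ < ℵ₀) : ∃ P : Set G, P.Finite ∧ ∃ Q : Set G, Q.Finite ∧
      ∀ x, ∃ q ∈ Q, ∃ p ∈ P, Δ p (q * x) ≤ 1 := by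
  obtain ⟨P, hPQ, hP⟩ := exists_finite_of_sInf_mk_lt_aleph0 h
    ⟨Set.univ, {1}, Set.finite_singleton 1, fun x => ⟨1, rfl, x, trivial, by simpa using hΔ x⟩⟩
  exact ⟨P, hP, hPQ⟩

end Cardinals

theorem precompact_iff_deltaFlat_finite_general {G : Type u} [Group G] [TopologicalSpace G] :
    (∀ Δ : G → G → ℝ, IsCRIP Δ → etaSharp Δ < Cardinal.aleph0) ↔
    (∀ Δ : G → G → ℝ, IsCRIP Δ → deltaFlat Δ < Cardinal.aleph0) := by
  refine ⟨fun h Δ hΔ => (deltaFlat_le_etaSharp fun x => ?_).trans_lt (h Δ hΔ), fun h Δ hΔ => ?_⟩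
  · simp [hΔ.1.1 x]
  -- the hypothesis for `2Δ` gives a cover by translates of `Δ`-balls of radius `1/2`
  obtain ⟨P, hP, Q, hQ, hcov⟩ := exists_finite_of_deltaFlat_lt_aleph0
    (fun x => by simp [hΔ.1.1 x]) (h _ (hΔ.const_mul_s11 zero_le_two))
  obtain ⟨F, hF, hnet⟩ := exists_finite_net_of_translate_cover (r := 1 / 2) hΔ.1 hΔ.2.1 hQ hP
    fun x => by
      obtain ⟨q, hq, p, hp, hpx⟩ := hcov x
      exact ⟨q, hq, p, hp, by linarith⟩
  exact etaSharp_lt_aleph0_of_finite hF fun x => by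
    obtain ⟨c, hc, hcx⟩ := hnet x
    exact ⟨c, hc, by linarith⟩

/-- Uspenskij's theorem: `G` is precompact (each `η♯(Δ)` finite)
iff `Δ♭(Δ)` is finite for every continuous right-invariant pseudometric `Δ`. -/
theorem precompact_iff_deltaFlat_finite {G : Type u} [Group G] [TopologicalSpace G]
    [IsTopologicalGroup G] :
    (∀ Δ : G → G → ℝ, IsCRIP Δ → etaSharp Δ < Cardinal.aleph0) ↔
    (∀ Δ : G → G → ℝ, IsCRIP Δ → deltaFlat Δ < Cardinal.aleph0) :=
  precompact_iff_deltaFlat_finite_general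
end

section
/- Let Δ be a pseudometric on a group G with Δ♭(Δ) ≥ ℵ₀. Let A be a set of cardinality Δ♭(Δ), and for each α ∈ A let F_α be a non-empty finite subset of G. Then there exist elements x_α ∈ G (α ∈ A) such that Δ(F_α x_α, F_β x_β) > 1 whenever α ≠ β, i.e., Δ(p x_α, q x_β) > 1 for all p ∈ F_α, q ∈ F_β. -/
/-! Enumerate `A` along the initial ordinal of `#A = Δ♭(Δ)` and choose the `x_α` by transfinite
recursion. At stage `α` the translates `F_β x_β` (`β < α`) already placed form a set `P` of fewer
than `Δ♭(Δ)` points, being a union of fewer than `Δ♭(Δ)` finite sets with `Δ♭(Δ)` infinite. So `P`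
together with the finite set `Q = F_α` cannot witness the infimum defining `Δ♭(Δ)`: some `x` lies
in no set `{x | Δ(p, qx) ≤ 1}`, and `x_α := x` is far from everything placed before. -/

open Cardinal Topology

universe u

theorem Cardinal.mk_iUnion_lt_of_finite {ι α : Type u} {s : ι → Set α} (hs : ∀ i, (s i).Finite)
    {κ : Cardinal.{u}} (hκ : ℵ₀ ≤ κ) (hι : #ι < κ) : #(⋃ i, s i) < κ := by
  cases finite_or_infinite ι
  · exact (Set.finite_iUnion hs).lt_aleph0.trans_le hκ
  · calc #(⋃ i, s i) ≤ sum fun i => #(s i) := mk_iUnion_le_sum_mk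
      _ ≤ sum fun _ : ι => ℵ₀ := sum_le_sum _ _ fun i => (hs i).lt_aleph0.le
      _ = #ι := by rw [sum_const', mul_aleph0_eq (aleph0_le_mk ι)]
      _ < κ := hι

theorem exists_pairwise_of_forall_mk_lt {A X : Type u} (R : A → X → A → X → Prop)
    (hR : ∀ a x b y, R a x b y → R b y a x)
    (hext : ∀ a (S : Set A), #S < #A → ∀ y : S → X, ∃ x, ∀ b : S, R a x b (y b)) :
    ∃ f : A → X, Pairwise fun a b => R a (f a) b (f b) := by
  -- a well-order of type `(#A).ord`: its proper initial segments have fewer than `#A` elements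
  obtain ⟨r, _, hr⟩ := Cardinal.exists_ord_eq A
  have hseg (a : A) : #{b | r b a} < #A := Cardinal.card_typein_lt a hr
  let f : A → X := IsWellFounded.fix r fun a ih =>
    (hext a {b | r b a} (hseg a) fun b => ih b b.2).choose
  have hf (a b : A) (hb : r b a) : R a (f a) b (f b) := by
    have hfa : f a = (hext a _ (hseg a) fun b => f b).choose := IsWellFounded.fix_eq _ _ _
    exact hfa ▸ (hext a _ (hseg a) fun b => f b).choose_spec ⟨b, hb⟩
  refine ⟨f, fun a b hab => ?_⟩
  rcases trichotomous_of r a b with h | rfl | h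
  · exact hR _ _ _ _ (hf b a h)
  · exact (hab rfl).elim
  · exact hf a b h

section deltaFlat

variable {G : Type u} [Group G] {Δ : G → G → ℝ}

theorem deltaFlat_le_mk {P Q : Set G} (hQ : Q.Finite)
    (hcover : ∀ x, ∃ q ∈ Q, ∃ p ∈ P, Δ p (q * x) ≤ 1) : deltaFlat Δ ≤ #P :=
  csInf_le' ⟨P, ⟨Q, hQ, hcover⟩, rfl⟩

theorem exists_far_of_mk_lt_deltaFlat {P Q : Set G} (hQ : Q.Finite) (hP : #P < deltaFlat Δ) :
    ∃ x, ∀ q ∈ Q, ∀ p ∈ P, 1 < Δ p (q * x) := by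
  by_contra! hcover
  exact (deltaFlat_le_mk hQ hcover).not_gt hP

theorem exists_translate_far_of_mk_lt_deltaFlat {S : Type u} (hΔ : ∀ x y, Δ x y = Δ y x)
    (hbig : ℵ₀ ≤ deltaFlat Δ) (hS : #S < deltaFlat Δ) (Q : Finset G) (F : S → Finset G)
    (y : S → G) : ∃ x, ∀ s, ∀ p ∈ Q, ∀ q ∈ F s, 1 < Δ (p * x) (q * y s) := by
  obtain ⟨x, hx⟩ := exists_far_of_mk_lt_deltaFlat (P := ⋃ s, (· * y s) '' (F s : Set G))
    Q.finite_toSet (mk_iUnion_lt_of_finite (fun s => (F s).finite_toSet.image _) hbig hS)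
  refine ⟨x, fun s p hp q hq => ?_⟩
  rw [hΔ]
  exact hx p hp _ (Set.mem_iUnion.2 ⟨s, q, hq, rfl⟩)

end deltaFlat

theorem separated_translates_general {G : Type u} [Group G] (Δ : G → G → ℝ)
    (hΔ : IsPseudometric Δ) (hbig : Cardinal.aleph0 ≤ deltaFlat Δ)
    (A : Type u) (hA : Cardinal.mk A = deltaFlat Δ)
    (F : A → Finset G) :
    ∃ x : A → G, ∀ α β : A, α ≠ β →
      ∀ p ∈ F α, ∀ q ∈ F β, 1 < Δ (p * x α) (q * x β) := by
  obtain ⟨x, hx⟩ := exists_pairwise_of_forall_mk_lt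
    (fun α g β h => ∀ p ∈ F α, ∀ q ∈ F β, 1 < Δ (p * g) (q * h))
    (fun _ _ _ _ h q hq p hp => hΔ.2.1 _ _ ▸ h p hp q hq)
    (fun α _ hS y => exists_translate_far_of_mk_lt_deltaFlat hΔ.2.1 hbig (hA ▸ hS) (F α)
      (fun b => F b.1) y)
  exact ⟨x, fun _ _ hne => hx hne⟩

/-- separation of translates of finite sets: if `Δ♭(Δ) ≥ ℵ₀` and
`(F_α)_{α ∈ A}` are nonempty finite subsets of `G` with `|A| = Δ♭(Δ)`, then there are
`x_α ∈ G` with `Δ(F_α x_α, F_β x_β) > 1` for `α ≠ β`. -/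
theorem separated_translates {G : Type u} [Group G] (Δ : G → G → ℝ)
    (hΔ : IsPseudometric Δ) (hbig : Cardinal.aleph0 ≤ deltaFlat Δ)
    (A : Type u) (hA : Cardinal.mk A = deltaFlat Δ)
    (F : A → Finset G) (hF : ∀ α, (F α).Nonempty) :
    ∃ x : A → G, ∀ α β : A, α ≠ β →
      ∀ p ∈ F α, ∀ q ∈ F β, 1 < Δ (p * x α) (q * x β) :=
  separated_translates_general Δ hΔ hbig A hA F
end

section
/- If G is the additive group of an infinite-dimensional (or more generally infinite) normed space with the norm topology, then G is ambitable: for every continuous (translation-)invariant pseudometric Δ' on G there exists a bounded uniformly continuous function f on G whose pointwise orbit closure contains BLip⁺(Δ'). -/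
open Cardinal Topology

universe u

/-- Translation invariance of a pseudometric on an additive group. -/
def AddInvariant {E : Type u} [AddGroup E] (Δ : E → E → ℝ) : Prop :=
  ∀ z z' x, Δ (z + x) (z' + x) = Δ z z'

/-!
With `ρ u := Δ' u 0`, a continuous group seminorm, `BLip⁺(Δ')` consists of the `[0,1]`-valued
`ρ`-Lipschitz functions. Each finite pattern of nodes with rational values gives a bump, and every
`g ∈ BLip⁺(Δ')` agrees up to `ε` on a finite set with some bump. The centres of a translate of
each bump can be chosen pairwise far apart, because there are no more patterns than points of a
`1`-separated net `N` of a hyperplane `φ = 0`: patterns are coded injectively by `N` times a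
countable set, spread out by scaling inside the hyperplane and stacked along a transversal
direction. The supremum `f` of all translated bumps then coincides with each bump near its centre,
so every `g ∈ BLip⁺(Δ')` is a pointwise limit of translates of `f`; and `f` is Lipschitz for
`ρ + ‖·‖`, so uniformly continuous.
-/

open Filter Metric

theorem mem_closure_of_forall_finset_dist_lt {X Y : Type*} [PseudoMetricSpace Y]
    {A : Set (X → Y)} {g : X → Y}
    (h : ∀ (F : Finset X) (ε : ℝ), 0 < ε → ∃ f ∈ A, ∀ x ∈ F, dist (f x) (g x) < ε) :
    g ∈ closure A := by
  have hbasis := hasBasis_pi fun x => nhds_basis_ball (x := g x)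
  rw [← nhds_pi] at hbasis
  rw [mem_closure_iff_nhds_basis hbasis]
  rintro ⟨I, ε⟩ ⟨hI, hε⟩
  obtain ⟨δ, hδ, hδε⟩ : ∃ δ : ℝ, 0 < δ ∧ ∀ x ∈ I, δ < ε x :=
    (eventually_mem_nhdsWithin.and ((eventually_all_finite hI).2 fun x hx =>
      nhdsWithin_le_nhds (eventually_lt_nhds (hε x hx)))).exists (f := 𝓝[>] (0 : ℝ))
  obtain ⟨f, hfA, hfg⟩ := h hI.toFinset δ hδ
  exact ⟨f, hfA, fun x hx => (hfg x (hI.mem_toFinset.2 hx)).trans (hδε x hx)⟩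

theorem uniformContinuous_of_le_add {E : Type*} [SeminormedAddCommGroup E] {f σ : E → ℝ}
    (hσ : Tendsto σ (𝓝 0) (𝓝 0)) (hf : ∀ y y', f y ≤ f y' + σ (y - y')) :
    UniformContinuous f := by
  rw [Metric.uniformContinuous_iff]
  intro ε hε
  obtain ⟨δ, hδ, hσδ⟩ := Metric.eventually_nhds_iff.1 (hσ.eventually (gt_mem_nhds hε))
  refine ⟨δ, hδ, fun {a b} hab => ?_⟩
  have hab₁ : dist (a - b) 0 < δ := by rwa [dist_zero_right, ← dist_eq_norm]
  have hab₂ : dist (b - a) 0 < δ := by rwa [dist_zero_right, ← dist_eq_norm, dist_comm]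
  rw [Real.dist_eq, abs_sub_lt_iff]
  constructor <;> linarith [hf a b, hf b a, hσδ hab₁, hσδ hab₂]

theorem Metric.exists_isSeparated_isCover {X : Type*} [PseudoEMetricSpace X] (ε : NNReal)
    (A : Set X) : ∃ N ⊆ A, IsSeparated ε N ∧ IsCover ε A N := by
  obtain ⟨N, hN⟩ := zorn_subset {N | N ⊆ A ∧ IsSeparated ε N} fun c hcS hc =>
    ⟨⋃₀ c, ⟨Set.sUnion_subset fun N hN => (hcS hN).1,
      hc.pairwise_sUnion.2 fun N hN => (hcS hN).2⟩, fun _ => Set.subset_sUnion_of_mem⟩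
  exact ⟨N, hN.prop.1, hN.prop.2, IsCover.of_maximal_isSeparated hN⟩

def IsPseudometric.addGroupSeminorm {E : Type*} [AddGroup E] {Δ : E → E → ℝ}
    (hΔ : IsPseudometric Δ) (hinv : AddInvariant Δ) : AddGroupSeminorm E where
  toFun u := Δ u 0
  map_zero' := hΔ.1 0
  add_le' r s := by
    have h := hinv r 0 s
    rw [zero_add] at h
    linarith [hΔ.2.2 (r + s) s 0]
  neg' r := by rw [← hinv (-r) 0 r, neg_add_cancel, zero_add, hΔ.2.1]

theorem IsPseudometric.addGroupSeminorm_sub {E : Type*} [AddGroup E] {Δ : E → E → ℝ}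
    (hΔ : IsPseudometric Δ) (hinv : AddInvariant Δ) (x y : E) :
    hΔ.addGroupSeminorm hinv (x - y) = Δ x y := by
  change Δ (x - y) 0 = Δ x y
  rw [← hinv (x - y) 0 y, sub_add_cancel, zero_add]

theorem Metric.IsSeparated.one_le_norm_sub {E : Type*} [SeminormedAddCommGroup E] {N : Set E}
    (hN : IsSeparated 1 N) : Pairwise fun a b : N => 1 ≤ ‖(a : E) - b‖ := fun a b hab => by
  have : 1 < edist (a : E) b := hN a.2 b.2 (Subtype.coe_injective.ne hab)
  rw [edist_dist, ENNReal.one_lt_ofReal, dist_eq_norm] at this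
  exact this.le

section Bumps

variable {E ι : Type*} [SeminormedAddCommGroup E] (ρ : AddGroupSeminorm E) (p : ι → E)

def patternRadius (P : Finset (ι × ℚ)) : ℝ := 1 + ∑ a ∈ P, ‖p a.1‖

/-- Apart from the clamping to `[0, 1]` and the cut-off outside a ball, this is McShane's
extension: the largest `ρ`-Lipschitz function with value at most `q` at each node `(i, q)` of `P`. -/
def patternBump (P : Finset (ι × ℚ)) (y : E) : ℝ :=
  max 0 (P.fold min (min 1 (patternRadius p P + 1 - ‖y‖)) fun a => a.2 + ρ (y - p a.1))

variable {P : Finset (ι × ℚ)}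

theorem norm_le_patternRadius {a : ι × ℚ} (ha : a ∈ P) : ‖p a.1‖ + 1 ≤ patternRadius p P := by
  have := Finset.single_le_sum (f := fun a : ι × ℚ => ‖p a.1‖) (fun _ _ => norm_nonneg _) ha
  rw [patternRadius]
  linarith

theorem patternBump_nonneg (y : E) : 0 ≤ patternBump ρ p P y := le_max_left _ _

theorem patternBump_le_one (y : E) : patternBump ρ p P y ≤ 1 :=
  max_le zero_le_one ((Finset.fold_min_le _).2 (Or.inl (min_le_left _ _)))

theorem patternBump_eq_zero {y : E} (hy : patternRadius p P + 1 ≤ ‖y‖) :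
    patternBump ρ p P y = 0 :=
  max_eq_left ((Finset.fold_min_le _).2 (Or.inl ((min_le_right _ _).trans (by linarith))))

theorem patternBump_le_add (y y' : E) :
    patternBump ρ p P y ≤ patternBump ρ p P y' + (ρ (y - y') + ‖y - y'‖) := by
  set M := ρ (y - y') + ‖y - y'‖
  have hM : 0 ≤ M := add_nonneg (apply_nonneg ρ _) (norm_nonneg _)
  set A := P.fold min (min 1 (patternRadius p P + 1 - ‖y‖)) fun a => a.2 + ρ (y - p a.1)
  have hA : A - M ≤ P.fold min (min 1 (patternRadius p P + 1 - ‖y'‖))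
      fun a => a.2 + ρ (y' - p a.1) := by
    refine (Finset.le_fold_min _).2 ⟨?_, fun a ha => ?_⟩
    · have hAb : A ≤ min 1 (patternRadius p P + 1 - ‖y‖) :=
        (Finset.fold_min_le _).2 (Or.inl le_rfl)
      have hy : ‖y'‖ - ‖y‖ ≤ M :=
        (norm_sub_norm_le y' y).trans (norm_sub_rev y' y ▸ le_add_of_nonneg_left (apply_nonneg ρ _))
      exact le_min (by linarith [min_le_left 1 (patternRadius p P + 1 - ‖y‖)])
        (by linarith [min_le_right 1 (patternRadius p P + 1 - ‖y‖)])
    · have hAa : A ≤ a.2 + ρ (y - p a.1) := (Finset.fold_min_le _).2 (Or.inr ⟨a, ha, le_rfl⟩)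
      have := map_sub_le_add ρ (y - y') (p a.1 - y')
      rw [sub_sub_sub_cancel_right, map_sub_rev ρ (p a.1)] at this
      linarith [norm_nonneg (y - y')]
  exact max_le (add_nonneg (patternBump_nonneg ρ p y') hM)
    ((sub_le_iff_le_add.1 hA).trans ((add_le_add_iff_right M).2 (le_max_right _ _)))

end Bumps

section Approximation

variable {E ι : Type*} [SeminormedAddCommGroup E] {ρ : AddGroupSeminorm E} {p : ι → E}

theorem exists_node_near (hp : DenseRange p) (hρ : Continuous ρ) (z : E) {η : ℝ} (hη : 0 < η) :
    ∃ i, ‖z - p i‖ < 1 ∧ ρ (z - p i) < η := by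
  have hsmall : ∀ᶠ u in 𝓝 (0 : E), ‖u‖ < 1 ∧ ρ u < η :=
    ((continuous_norm.tendsto' 0 0 norm_zero).eventually (gt_mem_nhds one_pos)).and
      ((hρ.tendsto' 0 0 (map_zero ρ)).eventually (gt_mem_nhds hη))
  have hsub : Tendsto (fun w => z - w) (𝓝 z) (𝓝 0) := by
    simpa using (tendsto_const_nhds (x := z)).sub (tendsto_id (x := 𝓝 z))
  exact hp.mem_nhds (hsub.eventually hsmall)

theorem exists_patternBump_approx (hp : DenseRange p) (hρ : Continuous ρ) {g : E → ℝ}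
    (hg : g ∈ BLip fun x y => ρ (x - y)) (F : Finset E) {ε : ℝ} (hε : 0 < ε) :
    ∃ P : Finset (ι × ℚ), ∀ z ∈ F,
      ‖z‖ ≤ patternRadius p P ∧ |patternBump ρ p P z - g z| < ε := by
  classical
  obtain ⟨hg01, hgρ⟩ := hg
  choose d hd using fun z => exists_node_near hp hρ z (by positivity : 0 < ε / 4)
  choose q hq using fun z => exists_rat_near (g (p (d z))) (by positivity : 0 < ε / 4)
  refine ⟨F.image fun z => (d z, q z), fun z hz => ?_⟩
  set P := F.image fun z => (d z, q z)
  have hzP : (d z, q z) ∈ P := Finset.mem_image_of_mem _ hz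
  have hzR : ‖z‖ ≤ patternRadius p P := by
    linarith [norm_le_norm_add_norm_sub' z (p (d z)), norm_le_patternRadius p hzP, (hd z).1]
  refine ⟨hzR, ?_⟩
  set A := P.fold min (min 1 (patternRadius p P + 1 - ‖z‖)) fun a => a.2 + ρ (z - p a.1)
  have hlow : g z - ε / 4 ≤ A := by
    refine (Finset.le_fold_min _).2 ⟨le_min ?_ ?_, ?_⟩
    · linarith [(hg01 z).2]
    · linarith [(hg01 z).2]
    · simp only [P, Finset.mem_image]
      rintro _ ⟨w, -, rfl⟩
      linarith [(abs_lt.1 (hq w)).2, (le_abs_self _).trans (hgρ z (p (d w)))]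
  have hup : A < g z + 3 * ε / 4 := by
    have hA : A ≤ q z + ρ (z - p (d z)) := (Finset.fold_min_le _).2 (Or.inr ⟨_, hzP, le_rfl⟩)
    linarith [(abs_lt.1 (hq z)).1, (hd z).2, (abs_le.1 (hgρ z (p (d z)))).1]
  rw [patternBump, abs_sub_lt_iff, sub_lt_iff_lt_add, max_lt_iff]
  exact ⟨⟨by linarith [(hg01 z).1], by linarith⟩, by linarith [le_max_right 0 A]⟩

end Approximation

section BumpSup

variable {E ι : Type*} [SeminormedAddCommGroup E] (ρ : AddGroupSeminorm E) (p : ι → E)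
  (c : Finset (ι × ℚ) → E)

noncomputable def bumpSup (y : E) : ℝ := ⨆ P, patternBump ρ p P (y - c P)

theorem patternBump_le_bumpSup (P : Finset (ι × ℚ)) (y : E) :
    patternBump ρ p P (y - c P) ≤ bumpSup ρ p c y :=
  le_ciSup (f := fun Q => patternBump ρ p Q (y - c Q))
    ⟨1, by rintro _ ⟨Q, rfl⟩; exact patternBump_le_one ρ p _⟩ P

theorem bumpSup_nonneg (y : E) : 0 ≤ bumpSup ρ p c y :=
  (patternBump_nonneg ρ p _).trans (patternBump_le_bumpSup ρ p c ∅ y)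

theorem bumpSup_le_one (y : E) : bumpSup ρ p c y ≤ 1 :=
  ciSup_le fun _ => patternBump_le_one ρ p _

theorem bumpSup_le_add (y y' : E) :
    bumpSup ρ p c y ≤ bumpSup ρ p c y' + (ρ (y - y') + ‖y - y'‖) :=
  ciSup_le fun P => by
    have := patternBump_le_add ρ p (P := P) (y - c P) (y' - c P)
    rw [sub_sub_sub_cancel_right] at this
    linarith [patternBump_le_bumpSup ρ p c P y']

theorem uniformContinuous_bumpSup (hρ : Continuous ρ) : UniformContinuous (bumpSup ρ p c) := by
  refine uniformContinuous_of_le_add (σ := fun u => ρ u + ‖u‖) ?_ (bumpSup_le_add ρ p c)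
  simpa using (hρ.tendsto' 0 0 (map_zero ρ)).add tendsto_norm_zero

variable {p c}

theorem bumpSup_add_center
    (hc : Pairwise fun P Q => patternRadius p P + patternRadius p Q + 1 ≤ ‖c P - c Q‖)
    {P : Finset (ι × ℚ)} {z : E} (hz : ‖z‖ ≤ patternRadius p P) :
    bumpSup ρ p c (z + c P) = patternBump ρ p P z := by
  refine le_antisymm (ciSup_le fun Q => ?_)
    (by simpa using patternBump_le_bumpSup ρ p c P (z + c P))
  rcases eq_or_ne Q P with rfl | hQP
  · rw [add_sub_cancel_right]
  · have hfar : patternRadius p Q + 1 ≤ ‖z + c P - c Q‖ := by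
      have := norm_sub_norm_le (c P - c Q) (-z)
      rw [norm_neg, sub_neg_eq_add, sub_add_eq_add_sub, add_comm (c P)] at this
      linarith [hc hQP.symm]
    rw [patternBump_eq_zero ρ p hfar]
    exact patternBump_nonneg ρ p z

theorem blip_subset_closure_orbit_bumpSup (hp : DenseRange p) (hρ : Continuous ρ)
    (hc : Pairwise fun P Q => patternRadius p P + patternRadius p Q + 1 ≤ ‖c P - c Q‖) :
    BLip (fun x y => ρ (x - y)) ⊆
      closure {g | ∃ x, g = fun z => bumpSup ρ p c (z + x)} := by
  intro g hg
  refine mem_closure_of_forall_finset_dist_lt fun F ε hε => ?_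
  obtain ⟨P, hP⟩ := exists_patternBump_approx hp hρ hg F hε
  refine ⟨_, ⟨c P, rfl⟩, fun z hz => ?_⟩
  rw [bumpSup_add_center ρ hc (hP z hz).1, Real.dist_eq]
  exact (hP z hz).2

end BumpSup

theorem add_le_abs_sq_sub_sq {m n : ℕ} (h : m ≠ n) : (m + n : ℝ) ≤ |(m : ℝ) ^ 2 - n ^ 2| := by
  have hmn : (1 : ℝ) ≤ |(m : ℝ) - n| := by
    exact_mod_cast Int.one_le_abs (sub_ne_zero.2 (by exact_mod_cast h : (m : ℤ) ≠ n))
  rw [sq_sub_sq, abs_mul, abs_of_nonneg (by positivity : (0 : ℝ) ≤ m + n)]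
  exact le_mul_of_one_le_right (by positivity) hmn

section NormedSpace

variable {E : Type*} [NormedAddCommGroup E] [NormedSpace ℝ E]

/-- Centres of the same level `ℓ = pair ⌈R⌉₊ (encode b)` are `2 ⌈R⌉₊ + 1` times distinct points
`s a`; centres of distinct levels lie on distinct hyperplanes `φ = ‖φ‖ ℓ ^ 2`, at distance at least
`|ℓ ^ 2 - ℓ' ^ 2| ≥ ℓ + ℓ'`. -/
theorem exists_pairwise_add_le_norm_sub {α β π : Type*} [Encodable β] (φ : StrongDual ℝ E)
    {v : E} (hv : φ v = 1) {s : α → E} (hφs : ∀ a, φ (s a) = 0)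
    (hs : Pairwise fun a b => 1 ≤ ‖s a - s b‖) (j : π ↪ α × β) (R : π → ℝ) :
    ∃ c : π → E, Pairwise fun P Q => R P + R Q ≤ ‖c P - c Q‖ := by
  set N : π → ℕ := fun P => ⌈R P⌉₊
  set level : π → ℕ := fun P => Nat.pair (N P) (Encodable.encode (j P).2)
  set c : π → E := fun P => (2 * N P + 1 : ℝ) • s (j P).1 + (‖φ‖ * level P ^ 2) • v
  refine ⟨c, fun P Q hPQ => ?_⟩
  have hR : ∀ P, R P ≤ N P := fun P => Nat.le_ceil _
  by_cases hlev : level P = level Q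
  · obtain ⟨hN, hb⟩ := Nat.pair_eq_pair.1 hlev
    have ha : (j P).1 ≠ (j Q).1 := fun ha =>
      hPQ (j.injective (Prod.ext ha (Encodable.encode_injective hb)))
    have hc : c P - c Q = (2 * N P + 1 : ℝ) • (s (j P).1 - s (j Q).1) := by
      simp only [c, hN, hlev]
      module
    show R P + R Q ≤ ‖c P - c Q‖
    rw [hc, norm_smul, Real.norm_of_nonneg (by positivity)]
    have := le_mul_of_one_le_right (by positivity : (0 : ℝ) ≤ 2 * N P + 1) (hs ha)
    have hNQ : (N Q : ℝ) = N P := by rw [hN]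
    linarith [hR P, hR Q]
  · have hφ : 0 < ‖φ‖ := norm_pos_iff.2 fun h => by simp [h] at hv
    have hslab : ‖φ‖ * |(level P : ℝ) ^ 2 - level Q ^ 2| ≤ ‖φ‖ * ‖c P - c Q‖ := by
      calc ‖φ‖ * |(level P : ℝ) ^ 2 - level Q ^ 2| = ‖φ (c P - c Q)‖ := by
            simp only [c, map_sub, map_add, map_smul, hφs, hv, smul_eq_mul, Real.norm_eq_abs,
              mul_zero, mul_one, zero_add]
            rw [← mul_sub, abs_mul, abs_of_pos hφ]
        _ ≤ ‖φ‖ * ‖c P - c Q‖ := φ.le_opNorm _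
    have hNP : (N P : ℝ) ≤ level P := by exact_mod_cast Nat.left_le_pair _ _
    have hNQ : (N Q : ℝ) ≤ level Q := by exact_mod_cast Nat.left_le_pair _ _
    linarith [add_le_abs_sq_sub_sq hlev, le_of_mul_le_mul_left hslab hφ, hR P, hR Q]

theorem denseRange_smul_add_smul (φ : StrongDual ℝ E) {v : E} (hv : φ v = 1) {N : Set E}
    (hN : IsCover 1 {x | φ x = 0} N) :
    DenseRange fun x : (N × ℕ) × ℚ => ((x.1.2 : ℝ) + 1)⁻¹ • (x.1.1 : E) + (x.2 : ℝ) • v := by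
  rw [Metric.denseRange_iff]
  intro x r hr
  obtain ⟨m, hm⟩ := exists_nat_one_div_lt (half_pos hr)
  set k := x - φ x • v
  have hk : ((m : ℝ) + 1) • k ∈ {x | φ x = 0} := by simp [k, hv]
  obtain ⟨s, hs, hks⟩ : ∃ s ∈ N, dist (((m : ℝ) + 1) • k) s ≤ 1 := by
    simpa using isCover_iff_subset_iUnion_closedBall.1 hN hk
  obtain ⟨t, ht⟩ := exists_rat_near (φ x) (by positivity : 0 < r / 2 / (‖v‖ + 1))
  refine ⟨((⟨s, hs⟩, m), t), ?_⟩
  have hnet : ‖k - ((m : ℝ) + 1)⁻¹ • s‖ ≤ 1 / (m + 1) := by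
    rw [← inv_smul_smul₀ (by positivity : (m : ℝ) + 1 ≠ 0) k, ← smul_sub, norm_smul,
      Real.norm_of_nonneg (by positivity), ← dist_eq_norm, one_div]
    exact mul_le_of_le_one_right (by positivity) hks
  have hline : ‖(φ x - t) • v‖ < r / 2 := by
    rw [lt_div_iff₀ (by positivity)] at ht
    rw [norm_smul, Real.norm_eq_abs]
    nlinarith [norm_nonneg v, abs_nonneg (φ x - t)]
  calc dist x _ = ‖(k - ((m : ℝ) + 1)⁻¹ • s) + (φ x - t) • v‖ := by
        rw [dist_eq_norm, sub_smul]
        congr 1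
        simp only [k]
        abel
    _ ≤ ‖k - ((m : ℝ) + 1)⁻¹ • s‖ + ‖(φ x - t) • v‖ := norm_add_le _ _
    _ < r := by linarith

end NormedSpace

/-- the additive group of an infinite normed space is ambitable: every
`BLip⁺(Δ')` for a continuous invariant pseudometric `Δ'` is contained in the pointwise
orbit closure of some bounded uniformly continuous function. -/
theorem normed_space_ambitable {E : Type u} [NormedAddCommGroup E] [NormedSpace ℝ E]
    [Infinite E] :
    ∀ Δ' : E → E → ℝ, IsPseudometric Δ' → AddInvariant Δ' →
      (Continuous fun p : E × E => Δ' p.1 p.2) →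
      ∃ f : E → ℝ, (∃ C : ℝ, ∀ x, |f x| ≤ C) ∧ UniformContinuous f ∧
        BLip Δ' ⊆ closure {g : E → ℝ | ∃ x : E, g = fun z => f (z + x)} := by
  intro Δ hΔ hinv hcont
  set ρ := hΔ.addGroupSeminorm hinv
  have hρ : Continuous ρ := hcont.comp (continuous_id.prodMk continuous_const)
  have hBLip : BLip Δ = BLip fun x y => ρ (x - y) := by simp only [ρ, hΔ.addGroupSeminorm_sub]
  obtain ⟨v, hv⟩ := exists_ne (0 : E)
  obtain ⟨φ, hφv⟩ := SeparatingDual.exists_eq_one (R := ℝ) hv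
  obtain ⟨N, hN0, hNsep, hNcover⟩ := exists_isSeparated_isCover 1 {x : E | φ x = 0}
  have : Nonempty N := (hNcover.nonempty ⟨0, map_zero φ⟩).to_subtype
  set p : (N × ℕ) × ℚ → E := fun x => ((x.1.2 : ℝ) + 1)⁻¹ • (x.1.1 : E) + (x.2 : ℝ) • v
  obtain ⟨e⟩ := Cardinal.eq.1 (Cardinal.mk_finset_of_infinite (((N × ℕ) × ℚ) × ℚ))
  obtain ⟨c, hc⟩ := exists_pairwise_add_le_norm_sub φ hφv (fun a : N => hN0 a.2)
    hNsep.one_le_norm_sub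
    (e.trans ((Equiv.prodAssoc _ _ _).trans (Equiv.prodAssoc _ _ _))).toEmbedding
    (fun P => patternRadius p P + 1 / 2)
  refine ⟨bumpSup ρ p c, ⟨1, fun y => abs_le.2 ⟨by linarith [bumpSup_nonneg ρ p c y],
    bumpSup_le_one ρ p c y⟩⟩, uniformContinuous_bumpSup ρ p c hρ, ?_⟩
  rw [hBLip]
  exact blip_subset_closure_orbit_bumpSup ρ (denseRange_smul_add_smul φ hφv hNcover) hρ
    fun P Q hPQ => by linarith [hc hPQ]
end
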